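/- arXiv:1906.02581 — 3 statements merged into one kernel-verified Lean document; each statement's English description precedes it below -/
import Mathlib

section
/- (Escape rate bounds success.) Let H₀, H₁ be Hermitian matrices on ℂ^d, let V be a subspace of ℂ^d invariant under H₀, and suppose the escape rate of V under H₁ is at most β. Let τ > 0 with βτ ≤ π/2, and let ψ : [0,τ] → ℂ^d be differentiable with ψ'(t) = −i[(1 − t/τ)H₀ + (t/τ)H₁]ψ(t) and ψ(0) a unit vector in V. Then for any unit vector α₁ with ‖Π_V α₁‖ ≤ ε, the overlap of the final state with α₁ satisfies |⟨α₁, ψ(τ)⟩| ≤ sin(βτ) + ε. -/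
/-!
Split `ψ t` along `V ⊕ Vᗮ`. The evolution is unitary, so `‖ψ t‖ = 1`, and the leaked weight
`g t = ‖Π_{Vᗮ} ψ t‖²` starts at `0`. Since `H₀` preserves `V` and the Hamiltonian is Hermitian,
amplitude can only leave `V` through the `Vᗮ`-component of `H₁` acting on `Π_V ψ`, which gives
`g' ≤ 2 β √g √(1 - g)`. Comparison with `sin² (β t)`, the solution of the corresponding ODE,
yields `‖Π_{Vᗮ} ψ τ‖ ≤ sin (β τ)`, and then `|⟪α₁, ψ τ⟫| ≤ ‖Π_V α₁‖ + ‖Π_{Vᗮ} ψ τ‖`.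
-/

open Set Real Submodule

theorem le_sin_sq_of_hasDerivAt_le_of_lt {g g' : ℝ → ℝ} {β τ θ : ℝ} (hβ : 0 ≤ β) (hτ : 0 < τ)
    (hθ : β * τ < θ) (hθπ : θ < π / 2) (hg : ∀ t ∈ Icc 0 τ, HasDerivAt g (g' t) t)
    (hg0 : g 0 = 0) (hg' : ∀ t ∈ Icc 0 τ, g' t ≤ 2 * β * √(g t) * √(1 - g t)) :
    g τ ≤ sin θ ^ 2 := by
  -- Barrier `sin² (θ - β' (τ - t))` with a slightly faster rate `β' > β`: the strict inequality
  -- of rates is what makes the comparison work although `√` is not Lipschitz at `0`.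
  obtain ⟨β', hβ', hβ'θ⟩ := exists_between ((lt_div_iff₀ hτ).2 hθ)
  have hβ'τ : β' * τ < θ := (lt_div_iff₀ hτ).1 hβ'θ
  have hB : ∀ t, HasDerivAt (fun t => sin (θ - β' * (τ - t)) ^ 2)
      (2 * sin (θ - β' * (τ - t)) * cos (θ - β' * (τ - t)) * β') t := by
    intro t
    refine ((((hasDerivAt_id' t).const_sub τ).const_mul β').const_sub θ).sin.fun_pow 2
      |>.congr_deriv ?_
    push_cast; ring
  have key := image_le_of_deriv_right_lt_deriv_boundary
    (fun t ht => (hg t ht).continuousAt.continuousWithinAt)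
    (fun t ht => (hg t (Ico_subset_Icc_self ht)).hasDerivWithinAt) ?_ hB ?_
    (right_mem_Icc.2 hτ.le)
  · simpa using key
  · rw [hg0]; positivity
  · intro t ht hgt
    set ξ := θ - β' * (τ - t)
    have hξ0 : 0 < ξ := by nlinarith [mul_nonneg (hβ.trans hβ'.le) ht.1]
    have hξπ : ξ < π / 2 := by nlinarith [mul_nonneg (hβ.trans hβ'.le) (sub_nonneg.2 ht.2.le)]
    have hsin : 0 < sin ξ := sin_pos_of_pos_of_lt_pi hξ0 (by linarith [pi_pos])
    have hcos : 0 < cos ξ := cos_pos_of_mem_Ioo ⟨by linarith [pi_pos], hξπ⟩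
    calc g' t ≤ 2 * β * √(sin ξ ^ 2) * √(cos ξ ^ 2) := by
          rw [cos_sq', ← hgt]; exact hg' t (Ico_subset_Icc_self ht)
      _ = 2 * sin ξ * cos ξ * β := by
          rw [sqrt_sq hsin.le, sqrt_sq hcos.le]; ring
      _ < 2 * sin ξ * cos ξ * β' := by gcongr

theorem le_sin_sq_of_hasDerivAt_le {g g' : ℝ → ℝ} {β τ : ℝ} (hβ : 0 ≤ β) (hτ : 0 < τ)
    (hβτ : β * τ ≤ π / 2) (hg : ∀ t ∈ Icc 0 τ, HasDerivAt g (g' t) t)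
    (hg0 : g 0 = 0) (hg1 : g τ ≤ 1)
    (hg' : ∀ t ∈ Icc 0 τ, g' t ≤ 2 * β * √(g t) * √(1 - g t)) :
    g τ ≤ sin (β * τ) ^ 2 := by
  rcases hβτ.lt_or_eq with hlt | heq
  · refine ge_of_tendsto ((continuous_sin.pow 2).continuousWithinAt (s := Ioi (β * τ))) ?_
    filter_upwards [Ioo_mem_nhdsGT hlt] with θ hθ
    exact le_sin_sq_of_hasDerivAt_le_of_lt hβ hτ hθ.1 hθ.2 hg hg0 hg'
  · simpa [heq] using hg1

local notation "⟪" x ", " y "⟫" => inner ℂ x y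

section Schrodinger

variable {E : Type*} [NormedAddCommGroup E] [InnerProductSpace ℂ E]

theorem HasDerivAt.norm_sq_of_complex {f : ℝ → E} {f' : E} {t : ℝ} (hf : HasDerivAt f f' t) :
    HasDerivAt (‖f ·‖ ^ 2) (2 * RCLike.re ⟪f t, f'⟫) t := by
  let _ : InnerProductSpace ℝ E := .rclikeToReal ℂ E
  simpa only [real_inner_eq_re_inner ℂ] using hf.norm_sq

theorem LinearMap.IsSymmetric.re_inner_neg_I_smul_apply_self {T : E →ₗ[ℂ] E} (hT : T.IsSymmetric)
    (x : E) : RCLike.re ⟪x, -Complex.I • T x⟫ = 0 := by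
  simpa [inner_smul_right] using hT.im_inner_self_apply x

theorem norm_eq_of_hasDerivAt_neg_I_smul {A : ℝ → E →L[ℂ] E} {ψ : ℝ → E} {a b : ℝ}
    (hA : ∀ t ∈ Icc a b, (A t : E →ₗ[ℂ] E).IsSymmetric)
    (hψ : ∀ t ∈ Icc a b, HasDerivAt ψ (-Complex.I • A t (ψ t)) t) :
    ∀ t ∈ Icc a b, ‖ψ t‖ = ‖ψ a‖ := by
  have hderiv : ∀ t ∈ Icc a b, HasDerivAt (‖ψ ·‖ ^ 2) 0 t := fun t ht => by
    have hre : RCLike.re ⟪ψ t, -Complex.I • A t (ψ t)⟫ = 0 :=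
      (hA t ht).re_inner_neg_I_smul_apply_self (ψ t)
    simpa only [hre, mul_zero] using (hψ t ht).norm_sq_of_complex
  intro t ht
  have hsq := constant_of_has_deriv_right_zero
    (fun s hs => (hderiv s hs).continuousAt.continuousWithinAt)
    (fun s hs => (hderiv s (Ico_subset_Icc_self hs)).hasDerivWithinAt) t ht
  exact (pow_left_inj₀ (norm_nonneg _) (norm_nonneg _) two_ne_zero).1 hsq

variable {V : Submodule ℂ E} [V.HasOrthogonalProjection]

theorem norm_starProjection_orthogonal_le_of_unit {A : E →L[ℂ] E} {β : ℝ}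
    (h : ∀ v ∈ V, ‖v‖ = 1 → ‖Vᗮ.starProjection (A v)‖ ≤ β) :
    ∀ v ∈ V, ‖Vᗮ.starProjection (A v)‖ ≤ β * ‖v‖ := by
  intro v hv
  rcases eq_or_ne v 0 with rfl | hv0
  · simp
  have hu := h _ (V.smul_mem (‖v‖⁻¹ : ℂ) hv) (norm_smul_inv_norm hv0)
  rw [map_smul, map_smul, norm_smul, norm_inv, Complex.norm_real, norm_norm] at hu
  rwa [inv_mul_le_iff₀ (norm_pos_iff.2 hv0), mul_comm] at hu

theorem norm_starProjection_orthogonal_smul_add_smul_apply_le {A₀ A₁ : E →L[ℂ] E} {β s : ℝ}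
    (hA₀ : ∀ v ∈ V, A₀ v ∈ V) (hA₁ : ∀ v ∈ V, ‖Vᗮ.starProjection (A₁ v)‖ ≤ β * ‖v‖)
    (hs : s ∈ Icc (0 : ℝ) 1) :
    ∀ v ∈ V, ‖Vᗮ.starProjection ((((1 - s : ℝ) : ℂ) • A₀ + (s : ℂ) • A₁) v)‖ ≤ β * ‖v‖ := by
  intro v hv
  have hβ : 0 ≤ β * ‖v‖ := (norm_nonneg _).trans (hA₁ v hv)
  calc ‖Vᗮ.starProjection ((((1 - s : ℝ) : ℂ) • A₀ + (s : ℂ) • A₁) v)‖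
      = s * ‖Vᗮ.starProjection (A₁ v)‖ := by
        rw [add_apply, smul_apply, smul_apply, map_add, map_smul, map_smul,
          starProjection_orthogonal_apply_eq_zero (hA₀ v hv), smul_zero, zero_add, norm_smul,
          Complex.norm_real, Real.norm_of_nonneg hs.1]
    _ ≤ 1 * (β * ‖v‖) := by gcongr; exacts [hs.2, hA₁ v hv]
    _ = β * ‖v‖ := one_mul _

theorem re_inner_starProjection_orthogonal_neg_I_smul_le {A : E →L[ℂ] E} {β : ℝ}
    (hA : (A : E →ₗ[ℂ] E).IsSymmetric) (hesc : ∀ v ∈ V, ‖Vᗮ.starProjection (A v)‖ ≤ β * ‖v‖)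
    (x : E) :
    RCLike.re ⟪Vᗮ.starProjection x, Vᗮ.starProjection (-Complex.I • A x)⟫ ≤
      β * ‖Vᗮ.starProjection x‖ * ‖V.starProjection x‖ := by
  rw [← inner_starProjection_left_eq_right,
    starProjection_eq_self_iff.2 (starProjection_apply_mem _ x)]
  set P := V.starProjection x
  set Q := Vᗮ.starProjection x
  -- The part of `A x` coming from `Q` contributes nothing (`A` is symmetric); the part coming
  -- from `P` is seen by `Q` only through its escaping component.
  have hsplit : ⟪Q, -Complex.I • A x⟫ = -Complex.I * ⟪Q, Vᗮ.starProjection (A P)⟫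
      + ⟪Q, -Complex.I • A Q⟫ := by
    conv_lhs => rw [← V.starProjection_add_starProjection_orthogonal x]
    rw [map_add, smul_add, inner_add_right, inner_smul_right, ← inner_starProjection_left_eq_right,
      starProjection_eq_self_iff.2 (starProjection_apply_mem _ x)]
  have hQQ : RCLike.re ⟪Q, -Complex.I • A Q⟫ = 0 := hA.re_inner_neg_I_smul_apply_self Q
  rw [hsplit, map_add, hQQ, add_zero]
  calc RCLike.re (-Complex.I * ⟪Q, Vᗮ.starProjection (A P)⟫)
      ≤ ‖Q‖ * ‖Vᗮ.starProjection (A P)‖ := by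
        refine (RCLike.re_le_norm _).trans ?_
        rw [norm_mul, norm_neg, Complex.norm_I, one_mul]
        exact norm_inner_le_norm _ _
    _ ≤ ‖Q‖ * (β * ‖P‖) := by gcongr; exact hesc P (starProjection_apply_mem _ x)
    _ = β * ‖Q‖ * ‖P‖ := by ring

theorem norm_starProjection_orthogonal_le_sin {A : ℝ → E →L[ℂ] E} {ψ : ℝ → E} {β τ : ℝ}
    (hτ : 0 < τ) (hβτ : β * τ ≤ π / 2) (hA : ∀ t ∈ Icc 0 τ, (A t : E →ₗ[ℂ] E).IsSymmetric)
    (hesc : ∀ t ∈ Icc 0 τ, ∀ v ∈ V, ‖Vᗮ.starProjection (A t v)‖ ≤ β * ‖v‖)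
    (hψ : ∀ t ∈ Icc 0 τ, HasDerivAt ψ (-Complex.I • A t (ψ t)) t)
    (hψ0V : ψ 0 ∈ V) (hψ0 : ‖ψ 0‖ = 1) :
    ‖Vᗮ.starProjection (ψ τ)‖ ≤ sin (β * τ) := by
  have hβ : 0 ≤ β := by
    simpa [hψ0] using (norm_nonneg _).trans (hesc 0 (left_mem_Icc.2 hτ.le) _ hψ0V)
  have hsin : 0 ≤ sin (β * τ) :=
    sin_nonneg_of_nonneg_of_le_pi (by positivity) (hβτ.trans (by linarith [pi_pos]))
  have hP : ∀ t ∈ Icc 0 τ,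
      ‖V.starProjection (ψ t)‖ ^ 2 = 1 - ‖Vᗮ.starProjection (ψ t)‖ ^ 2 := fun t ht => by
    have h := norm_sq_eq_add_norm_sq_starProjection (ψ t) V
    rw [norm_eq_of_hasDerivAt_neg_I_smul hA hψ t ht, hψ0] at h
    linarith
  have hg : ∀ t ∈ Icc 0 τ, HasDerivAt (fun s => ‖Vᗮ.starProjection (ψ s)‖ ^ 2)
      (2 * RCLike.re ⟪Vᗮ.starProjection (ψ t), Vᗮ.starProjection (-Complex.I • A t (ψ t))⟫) t :=
    fun t ht => ((Vᗮ.starProjection.restrictScalars ℝ).hasFDerivAt.comp_hasDerivAt t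
      (hψ t ht)).norm_sq_of_complex
  have key := le_sin_sq_of_hasDerivAt_le hβ hτ hβτ hg
    (by simp [starProjection_orthogonal_apply_eq_zero hψ0V]) ?_ ?_
  · exact (pow_le_pow_iff_left₀ (norm_nonneg _) hsin two_ne_zero).1 key
  · have := hP τ (right_mem_Icc.2 hτ.le)
    nlinarith [sq_nonneg ‖V.starProjection (ψ τ)‖]
  · intro t ht
    rw [← hP t ht, sqrt_sq (norm_nonneg _), sqrt_sq (norm_nonneg _), mul_assoc, mul_assoc]
    gcongr 2 * ?_
    simpa only [mul_assoc] using
      re_inner_starProjection_orthogonal_neg_I_smul_le (hA t ht) (hesc t ht) (ψ t)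

theorem norm_inner_le_norm_starProjection_add (α x : E) :
    ‖⟪α, x⟫‖ ≤ ‖V.starProjection α‖ * ‖x‖ + ‖α‖ * ‖Vᗮ.starProjection x‖ :=
  calc ‖⟪α, x⟫‖ = ‖⟪V.starProjection α, x⟫ + ⟪α, Vᗮ.starProjection x⟫‖ := by
        rw [inner_starProjection_left_eq_right, ← inner_add_right,
          starProjection_add_starProjection_orthogonal]
    _ ≤ ‖V.starProjection α‖ * ‖x‖ + ‖α‖ * ‖Vᗮ.starProjection x‖ :=
        (norm_add_le _ _).trans (add_le_add (norm_inner_le_norm _ _) (norm_inner_le_norm _ _))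

end Schrodinger

/-- escape rate bounds success: under the hypotheses of Statement 6, for any
unit vector `α₁` with `‖Π_V α₁‖ ≤ ε`, the overlap of the final state with `α₁` satisfies
`|⟨α₁, ψ(τ)⟩| ≤ sin(βτ) + ε`. -/
theorem stmt_7 (d : ℕ) (H₀ H₁ : Matrix (Fin d) (Fin d) ℂ)
    (hH₀ : H₀.IsHermitian) (hH₁ : H₁.IsHermitian)
    (V : Submodule ℂ (EuclideanSpace ℂ (Fin d)))
    (hinv : ∀ v ∈ V, Matrix.toEuclideanCLM (𝕜 := ℂ) H₀ v ∈ V)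
    (β : ℝ)
    (hesc : ∀ v ∈ V, ‖v‖ = 1 →
      ‖(Submodule.orthogonalProjectionOnto Vᗮ (Matrix.toEuclideanCLM (𝕜 := ℂ) H₁ v) :
        EuclideanSpace ℂ (Fin d))‖ ≤ β)
    (τ : ℝ) (hτ : 0 < τ) (hβτ : β * τ ≤ Real.pi / 2)
    (ψ : ℝ → EuclideanSpace ℂ (Fin d))
    (hψ : ∀ t ∈ Set.Icc (0 : ℝ) τ,
      HasDerivAt ψ ((-Complex.I) • Matrix.toEuclideanCLM (𝕜 := ℂ)
        (((1 - t / τ : ℝ) : ℂ) • H₀ + ((t / τ : ℝ) : ℂ) • H₁) (ψ t)) t)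
    (hψ0V : ψ 0 ∈ V) (hψ0 : ‖ψ 0‖ = 1)
    (α₁ : EuclideanSpace ℂ (Fin d)) (hα₁ : ‖α₁‖ = 1) (ε : ℝ)
    (hα₁V : ‖(Submodule.orthogonalProjectionOnto V α₁ : EuclideanSpace ℂ (Fin d))‖ ≤ ε) :
    ‖(inner ℂ α₁ (ψ τ) : ℂ)‖ ≤ Real.sin (β * τ) + ε := by
  set A : ℝ → EuclideanSpace ℂ (Fin d) →L[ℂ] EuclideanSpace ℂ (Fin d) := fun t =>
    Matrix.toEuclideanCLM (𝕜 := ℂ) (((1 - t / τ : ℝ) : ℂ) • H₀ + ((t / τ : ℝ) : ℂ) • H₁)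
  have hA : ∀ t ∈ Icc 0 τ,
      (A t : EuclideanSpace ℂ (Fin d) →ₗ[ℂ] EuclideanSpace ℂ (Fin d)).IsSymmetric := by
    intro t _
    have hM : (((1 - t / τ : ℝ) : ℂ) • H₀ + ((t / τ : ℝ) : ℂ) • H₁).IsHermitian :=
      (hH₀.smul (Complex.conj_ofReal _)).add (hH₁.smul (Complex.conj_ofReal _))
    exact Matrix.isSymmetric_toEuclideanLin_iff.2 hM
  have hescA : ∀ t ∈ Icc 0 τ, ∀ v ∈ V, ‖Vᗮ.starProjection (A t v)‖ ≤ β * ‖v‖ := by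
    intro t ht
    simp only [A, map_add, map_smul]
    exact norm_starProjection_orthogonal_smul_add_smul_apply_le hinv
      (norm_starProjection_orthogonal_le_of_unit hesc)
      ⟨div_nonneg ht.1 hτ.le, div_le_one_of_le₀ ht.2 hτ.le⟩
  have hψτ : ‖ψ τ‖ = 1 :=
    (norm_eq_of_hasDerivAt_neg_I_smul hA hψ τ (right_mem_Icc.2 hτ.le)).trans hψ0
  have hleak := norm_starProjection_orthogonal_le_sin hτ hβτ hA hescA hψ hψ0V hψ0
  calc ‖⟪α₁, ψ τ⟫‖ ≤ ‖V.starProjection α₁‖ * ‖ψ τ‖ + ‖α₁‖ * ‖Vᗮ.starProjection (ψ τ)‖ :=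
        norm_inner_le_norm_starProjection_add α₁ (ψ τ)
    _ ≤ ε * 1 + 1 * sin (β * τ) := by
        rw [hψτ, hα₁]; gcongr; exact hα₁V
    _ = sin (β * τ) + ε := by ring
end

section
/- (Robustness by confinement.) Let H(t) be a continuous family of Hermitian matrices on ℂ^N, let ψ : [0,τ] → ℂ^N be differentiable with ψ'(t) = −i H(t) ψ(t) and ‖ψ(0)‖ = 1, and suppose there is a subspace X with ‖Π_{X⊥} ψ(t)‖ ≤ η for all t ∈ [0,τ]. Let {w_i}_{i=1}^N be any orthonormal basis of ℂ^N and let d ≤ N. Then there exists a set D of d basis indices, with W = span{w_i : i ∈ D}, such that for every continuous family of Hermitian matrices δH(t) whose image is contained in W and with ‖δH(t)‖ ≤ g_max for all t, the solution ψ̃ of ψ̃'(t) = −i(H(t) + δH(t))ψ̃(t) with ψ̃(0) = ψ(0) satisfies ‖ψ(τ) − ψ̃(τ)‖ ≤ τ g_max (√(d · (dim X)/N) + η). -/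
/-!
Choose `D` to consist of the `d` indices with the smallest weights `‖Π_X w_i‖²`. These weights
sum to `dim X` (the trace of `Π_X`), so their sum over `D` is at most `d · dim X / N`.
A Hermitian `δH` with image in `W` vanishes on `W⊥`, hence
`δH ψ = δH Π_W Π_X ψ + δH Π_{X⊥} ψ`, and `‖Π_W Π_X ψ‖² = ∑_{i ∈ D} |⟪Π_X w_i, ψ⟫|²` is at most
`d · dim X / N` because the unperturbed evolution keeps `‖ψ‖ = 1`. The difference `ψ̃ − ψ` obeys
a Schrödinger equation driven by the source `−i δH ψ`; the Hermitian part does not change its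
norm, so the norm grows at most at the rate `‖δH ψ‖ ≤ g_max (√(d · dim X / N) + η)`.
-/

open Set Submodule
open scoped InnerProductSpace

section Selection

variable {ι : Type*} [Fintype ι]

theorem exists_card_eq_forall_mem_forall_notMem_le {α : Type*} [LinearOrder α] (f : ι → α)
    {d : ℕ} (hd : d ≤ Fintype.card ι) :
    ∃ D : Finset ι, D.card = d ∧ ∀ i ∈ D, ∀ j ∉ D, f i ≤ f j := by
  classical
  induction d with
  | zero => exact ⟨∅, rfl, by simp⟩
  | succ k ih =>
    obtain ⟨D, hcard, hle⟩ := ih (Nat.le_of_succ_le hd)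
    have hne : Dᶜ.Nonempty := by
      rw [← Finset.card_pos, Finset.card_compl, hcard]
      omega
    obtain ⟨j, hj, hjmin⟩ := Dᶜ.exists_min_image f hne
    rw [Finset.mem_compl] at hj
    refine ⟨insert j D, by rw [Finset.card_insert_of_notMem hj, hcard], ?_⟩
    intro i hi k hk
    rw [Finset.mem_insert, not_or] at hk
    rcases Finset.mem_insert.mp hi with rfl | hi
    · exact hjmin k (Finset.mem_compl.mpr hk.2)
    · exact hle i hi k hk.2

theorem exists_card_eq_sum_le_mul_sum_div (f : ι → ℝ) {d : ℕ} (hd : d ≤ Fintype.card ι) :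
    ∃ D : Finset ι, D.card = d ∧ ∑ i ∈ D, f i ≤ d * (∑ i, f i) / Fintype.card ι := by
  classical
  obtain ⟨D, hcard, hle⟩ := exists_card_eq_forall_mem_forall_notMem_le f hd
  refine ⟨D, hcard, ?_⟩
  rcases (Fintype.card ι).eq_zero_or_pos with hN | hN
  · have : IsEmpty ι := Fintype.card_eq_zero_iff.mp hN
    simp [Finset.eq_empty_of_isEmpty D]
  have hcross : (Dᶜ.card : ℝ) * ∑ i ∈ D, f i ≤ D.card * ∑ j ∈ Dᶜ, f j :=
    calc (Dᶜ.card : ℝ) * ∑ i ∈ D, f i = ∑ _j ∈ Dᶜ, ∑ i ∈ D, f i := by simp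
      _ ≤ ∑ j ∈ Dᶜ, ∑ _i ∈ D, f j := Finset.sum_le_sum fun j hj =>
          Finset.sum_le_sum fun i hi => hle i hi j (Finset.mem_compl.mp hj)
      _ = D.card * ∑ j ∈ Dᶜ, f j := by simp [Finset.mul_sum]
  rw [Finset.card_compl, hcard, Nat.cast_sub hd] at hcross
  rw [le_div_iff₀ (by exact_mod_cast hN), ← Finset.sum_add_sum_compl D f]
  linear_combination hcross

end Selection

section Projection

variable {𝕜 E ι : Type*} [RCLike 𝕜] [NormedAddCommGroup E] [InnerProductSpace 𝕜 E]

theorem OrthonormalBasis.norm_sq_starProjection [Fintype ι] {U : Submodule 𝕜 E}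
    [U.HasOrthogonalProjection] (b : OrthonormalBasis ι 𝕜 U) (x : E) :
    ‖U.starProjection x‖ ^ 2 = ∑ i, ‖⟪(b i : E), x⟫_𝕜‖ ^ 2 := by
  rw [starProjection_apply, norm_coe, ← b.sum_sq_norm_inner_right]
  simp only [inner_orthogonalProjectionOnto_eq_of_mem_left]

theorem OrthonormalBasis.sum_norm_sq_starProjection [Fintype ι] (b : OrthonormalBasis ι 𝕜 E)
    (K : Submodule 𝕜 E) [FiniteDimensional 𝕜 K] :
    ∑ i, ‖K.starProjection (b i)‖ ^ 2 = Module.finrank 𝕜 K := by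
  let v := stdOrthonormalBasis 𝕜 K
  calc ∑ i, ‖K.starProjection (b i)‖ ^ 2
      = ∑ i, ∑ j, ‖⟪(v j : E), b i⟫_𝕜‖ ^ 2 := by simp only [v.norm_sq_starProjection]
    _ = ∑ j, ∑ i, ‖⟪(v j : E), b i⟫_𝕜‖ ^ 2 := Finset.sum_comm
    _ = ∑ _j : Fin (Module.finrank 𝕜 K), (1 : ℝ) := Finset.sum_congr rfl fun j _ => by
        rw [b.sum_sq_norm_inner_left, norm_coe, v.orthonormal.1 j, one_pow]
    _ = Module.finrank 𝕜 K := by simp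

theorem Orthonormal.norm_sq_starProjection_span [DecidableEq E] {v : ι → E}
    (hv : Orthonormal 𝕜 v) (s : Finset ι) (x : E) :
    ‖(span 𝕜 (s.image v : Set E)).starProjection x‖ ^ 2 = ∑ i ∈ s, ‖⟪v i, x⟫_𝕜‖ ^ 2 := by
  rw [(OrthonormalBasis.span hv s).norm_sq_starProjection, ← Finset.sum_coe_sort s]
  simp

theorem LinearMap.IsSymmetric.apply_starProjection {T : E →ₗ[𝕜] E} (hT : T.IsSymmetric)
    {W : Submodule 𝕜 E} [W.HasOrthogonalProjection] (hW : ∀ x, T x ∈ W) (x : E) :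
    T (W.starProjection x) = T x := by
  have hker : ∀ y ∈ Wᗮ, T y = 0 := fun y hy => inner_self_eq_zero.mp <| by
    rw [hT y (T y)]
    exact inner_left_of_mem_orthogonal (hW _) hy
  refine (sub_eq_zero.mp ?_).symm
  rw [← map_sub]
  exact hker _ (W.sub_starProjection_mem_orthogonal x)

theorem ContinuousLinearMap.norm_apply_le_of_isSymmetric_of_mem_span [DecidableEq E]
    {T : E →L[𝕜] E} (hT : (T : E →ₗ[𝕜] E).IsSymmetric) {v : ι → E} (hv : Orthonormal 𝕜 v)
    {s : Finset ι} (hTs : ∀ x, T x ∈ span 𝕜 (s.image v : Set E)) (X : Submodule 𝕜 E)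
    [X.HasOrthogonalProjection] (x : E) :
    ‖T x‖ ≤ ‖T‖ * (‖x‖ * √(∑ i ∈ s, ‖X.starProjection (v i)‖ ^ 2) + ‖Xᗮ.starProjection x‖) := by
  set W := span 𝕜 (s.image v : Set E)
  have hfactor : ∀ y, T (W.starProjection y) = T y := hT.apply_starProjection hTs
  have hoverlap : ‖W.starProjection (X.starProjection x)‖ ≤
      ‖x‖ * √(∑ i ∈ s, ‖X.starProjection (v i)‖ ^ 2) := by
    rw [← Real.sqrt_sq (norm_nonneg x), ← Real.sqrt_mul (sq_nonneg _)]
    apply Real.le_sqrt_of_sq_le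
    rw [hv.norm_sq_starProjection_span, Finset.mul_sum]
    gcongr with i
    rw [← inner_starProjection_left_eq_right, mul_comm, ← mul_pow]
    gcongr
    exact norm_inner_le_norm _ _
  calc ‖T x‖ = ‖T (W.starProjection (X.starProjection x)) + T (Xᗮ.starProjection x)‖ := by
        rw [hfactor, ← map_add, X.starProjection_add_starProjection_orthogonal]
    _ ≤ ‖T‖ * ‖W.starProjection (X.starProjection x)‖ + ‖T‖ * ‖Xᗮ.starProjection x‖ :=
        (norm_add_le _ _).trans (add_le_add (T.le_opNorm _) (T.le_opNorm _))
    _ ≤ _ := by rw [mul_add]; gcongr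

end Projection

theorem norm_le_norm_add_mul_of_re_inner_deriv_le {𝕜 E : Type*} [RCLike 𝕜]
    [NormedAddCommGroup E] [InnerProductSpace 𝕜 E] [NormedSpace ℝ E] [IsScalarTower ℝ 𝕜 E]
    {g g' : ℝ → E} {a b C : ℝ} (hC : 0 ≤ C) (hg : ∀ t ∈ Icc a b, HasDerivAt g (g' t) t)
    (hbound : ∀ t ∈ Ico a b, RCLike.re ⟪g t, g' t⟫_𝕜 ≤ C * ‖g t‖) :
    ∀ x ∈ Icc a b, ‖g x‖ ≤ ‖g a‖ + C * (x - a) := by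
  intro x hx
  -- `‖g‖` need not be differentiable where `g` vanishes; compare the smooth `√(‖g‖² + ε²)`.
  refine le_of_forall_pos_le_add fun ε hε => ?_
  set φ : ℝ → ℝ := fun s => √(‖g s‖ ^ 2 + ε ^ 2)
  have hpos : ∀ s, 0 < ‖g s‖ ^ 2 + ε ^ 2 := fun s => by positivity
  have hnorm_le : ∀ s, ‖g s‖ ≤ φ s := fun s => Real.le_sqrt_of_sq_le (by nlinarith)
  have hφ : ∀ t ∈ Icc a b, HasDerivAt φ (RCLike.re ⟪g t, g' t⟫_𝕜 / φ t) t := by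
    intro t ht
    have hsq : HasDerivAt (fun s => ‖g s‖ ^ 2) (2 * RCLike.re ⟪g t, g' t⟫_𝕜) t := by
      have h := (RCLike.reCLM (K := 𝕜)).hasFDerivAt.comp_hasDerivAt t
        ((hg t ht).inner 𝕜 (hg t ht))
      simp only [Function.comp_def, RCLike.reCLM_apply, inner_self_eq_norm_sq] at h
      refine h.congr_deriv ?_
      rw [map_add, ← inner_conj_symm (g' t), RCLike.conj_re]
      ring
    convert (hsq.add_const (ε ^ 2)).sqrt (hpos t).ne' using 1
    rw [mul_div_mul_left _ _ two_ne_zero]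
  have hφ' : ∀ t ∈ Ico a b, RCLike.re ⟪g t, g' t⟫_𝕜 / φ t ≤ C := fun t ht =>
    div_le_of_le_mul₀ (Real.sqrt_nonneg _) hC
      ((hbound t ht).trans (mul_le_mul_of_nonneg_left (hnorm_le t) hC))
  have hcomp := image_le_of_deriv_right_le_deriv_boundary (f := φ)
    (B := fun s => φ a + C * (s - a)) (B' := fun _ => C)
    (fun t ht => (hφ t ht).continuousAt.continuousWithinAt)
    (fun t ht => (hφ t (Ico_subset_Icc_self ht)).hasDerivWithinAt) (by simp) (by fun_prop)
    (fun t _ => by simpa using (((hasDerivAt_id t).sub_const a).const_mul C).const_add (φ a)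
      |>.hasDerivWithinAt) hφ' hx
  have hφa : φ a ≤ ‖g a‖ + ε :=
    Real.sqrt_le_iff.mpr ⟨by positivity, by nlinarith [norm_nonneg (g a)]⟩
  linarith [hnorm_le x]

section Schrodinger

variable {E : Type*} [NormedAddCommGroup E] [InnerProductSpace ℂ E]

theorem norm_le_norm_add_mul_of_hasDerivAt_neg_I_smul_add {A : ℝ → E →L[ℂ] E} {φ f : ℝ → E}
    {a b C : ℝ} (hC : 0 ≤ C)
    (hA : ∀ t ∈ Ico a b, (A t : E →ₗ[ℂ] E).IsSymmetric)
    (hφ : ∀ t ∈ Icc a b, HasDerivAt φ (-Complex.I • A t (φ t) + f t) t)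
    (hf : ∀ t ∈ Ico a b, ‖f t‖ ≤ C) :
    ∀ x ∈ Icc a b, ‖φ x‖ ≤ ‖φ a‖ + C * (x - a) :=
  norm_le_norm_add_mul_of_re_inner_deriv_le (𝕜 := ℂ) hC hφ fun t ht => by
    have hskew : RCLike.re ⟪φ t, -Complex.I • A t (φ t)⟫_ℂ = 0 := by
      simpa [inner_smul_right] using (hA t ht).im_inner_self_apply (φ t)
    calc RCLike.re ⟪φ t, -Complex.I • A t (φ t) + f t⟫_ℂ = RCLike.re ⟪φ t, f t⟫_ℂ := by
          rw [inner_add_right, map_add, hskew, zero_add]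
      _ ≤ ‖φ t‖ * ‖f t‖ := (RCLike.re_le_norm _).trans (norm_inner_le_norm _ _)
      _ ≤ C * ‖φ t‖ := by rw [mul_comm]; gcongr; exact hf t ht

theorem norm_le_norm_of_hasDerivAt_neg_I_smul {A : ℝ → E →L[ℂ] E} {ψ : ℝ → E} {a b : ℝ}
    (hA : ∀ t ∈ Ico a b, (A t : E →ₗ[ℂ] E).IsSymmetric)
    (hψ : ∀ t ∈ Icc a b, HasDerivAt ψ (-Complex.I • A t (ψ t)) t) :
    ∀ x ∈ Icc a b, ‖ψ x‖ ≤ ‖ψ a‖ := fun x hx => by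
  simpa using norm_le_norm_add_mul_of_hasDerivAt_neg_I_smul_add (f := 0) le_rfl hA
    (fun t ht => by simpa using hψ t ht) (fun _ _ => by simp) x hx

theorem norm_sub_le_mul_of_hasDerivAt_neg_I_smul {A B : ℝ → E →L[ℂ] E} {ψ φ : ℝ → E}
    {a b C : ℝ} (hC : 0 ≤ C)
    (hAB : ∀ t ∈ Ico a b, ((A t + B t : E →L[ℂ] E) : E →ₗ[ℂ] E).IsSymmetric)
    (hψ : ∀ t ∈ Icc a b, HasDerivAt ψ (-Complex.I • A t (ψ t)) t)
    (hφ : ∀ t ∈ Icc a b, HasDerivAt φ (-Complex.I • (A t + B t) (φ t)) t)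
    (h0 : φ a = ψ a) (hB : ∀ t ∈ Ico a b, ‖B t (ψ t)‖ ≤ C) :
    ∀ x ∈ Icc a b, ‖ψ x - φ x‖ ≤ C * (x - a) := fun x hx => by
  have h := norm_le_norm_add_mul_of_hasDerivAt_neg_I_smul_add (A := fun t => A t + B t)
    (φ := φ - ψ) (f := fun t => -Complex.I • B t (ψ t)) hC hAB
    (fun t ht => ((hφ t ht).sub (hψ t ht)).congr_deriv (by
      simp only [add_apply, Pi.sub_apply, map_sub, smul_sub, smul_add]
      abel))
    (fun t ht => by rw [norm_smul, norm_neg, Complex.norm_I, one_mul]; exact hB t ht) x hx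
  rwa [Pi.sub_apply, Pi.sub_apply, h0, sub_self, norm_zero, zero_add, norm_sub_rev] at h

end Schrodinger

theorem Matrix.IsHermitian.isSymmetric_toEuclideanCLM {𝕜 n : Type*} [RCLike 𝕜] [Fintype n]
    [DecidableEq n] {A : Matrix n n 𝕜} (hA : A.IsHermitian) :
    (Matrix.toEuclideanCLM (𝕜 := 𝕜) A :
      EuclideanSpace 𝕜 n →ₗ[𝕜] EuclideanSpace 𝕜 n).IsSymmetric :=
  Matrix.isSymmetric_toEuclideanLin_iff.mpr hA

theorem stmt_11_general (N : ℕ) (τ η g_max : ℝ) (hτ : 0 ≤ τ)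
    (H : ℝ → Matrix (Fin N) (Fin N) ℂ)
    (hHherm : ∀ t ∈ Set.Icc (0 : ℝ) τ, (H t).IsHermitian)
    (ψ : ℝ → EuclideanSpace ℂ (Fin N))
    (hψ : ∀ t ∈ Set.Icc (0 : ℝ) τ,
      HasDerivAt ψ ((-Complex.I) • Matrix.toEuclideanCLM (𝕜 := ℂ) (H t) (ψ t)) t)
    (hψ0 : ‖ψ 0‖ = 1)
    (X : Submodule ℂ (EuclideanSpace ℂ (Fin N)))
    (hX : ∀ t ∈ Set.Icc (0 : ℝ) τ,
      ‖(Submodule.orthogonalProjection Xᗮ (ψ t) : EuclideanSpace ℂ (Fin N))‖ ≤ η)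
    (w : OrthonormalBasis (Fin N) ℂ (EuclideanSpace ℂ (Fin N)))
    (d : ℕ) (hd : d ≤ N) :
    ∃ D : Finset (Fin N), D.card = d ∧
      ∀ (δH : ℝ → Matrix (Fin N) (Fin N) ℂ) (ψt : ℝ → EuclideanSpace ℂ (Fin N)),
        ContinuousOn δH (Set.Icc 0 τ) →
        (∀ t ∈ Set.Icc (0 : ℝ) τ, (δH t).IsHermitian) →
        (∀ t ∈ Set.Icc (0 : ℝ) τ, ∀ x, Matrix.toEuclideanCLM (𝕜 := ℂ) (δH t) x
          ∈ Submodule.span ℂ (w '' D)) →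
        (∀ t ∈ Set.Icc (0 : ℝ) τ, ‖Matrix.toEuclideanCLM (𝕜 := ℂ) (δH t)‖ ≤ g_max) →
        (∀ t ∈ Set.Icc (0 : ℝ) τ,
          HasDerivAt ψt ((-Complex.I) • Matrix.toEuclideanCLM (𝕜 := ℂ)
            (H t + δH t) (ψt t)) t) →
        ψt 0 = ψ 0 →
        ‖ψ τ - ψt τ‖ ≤ τ * g_max *
          (Real.sqrt ((d : ℝ) * (Module.finrank ℂ X) / N) + η) := by
  classical
  obtain ⟨D, hDcard, hDsum⟩ := exists_card_eq_sum_le_mul_sum_div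
    (fun i => ‖X.starProjection (w i)‖ ^ 2) (d := d) (by simpa using hd)
  rw [w.sum_norm_sq_starProjection, Fintype.card_fin] at hDsum
  refine ⟨D, hDcard, fun δH ψt _ hδherm hδspan hδnorm hψt hinit => ?_⟩
  have h0 : (0 : ℝ) ∈ Icc 0 τ := ⟨le_rfl, hτ⟩
  have hg0 : 0 ≤ g_max := (norm_nonneg _).trans (hδnorm 0 h0)
  have hη0 : 0 ≤ η := (norm_nonneg _).trans (hX 0 h0)
  have hψnorm : ∀ t ∈ Icc 0 τ, ‖ψ t‖ ≤ 1 := fun t ht => hψ0 ▸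
    norm_le_norm_of_hasDerivAt_neg_I_smul (A := fun s => Matrix.toEuclideanCLM (𝕜 := ℂ) (H s))
      (fun s hs => (hHherm s (Ico_subset_Icc_self hs)).isSymmetric_toEuclideanCLM) hψ t ht
  have hkick : ∀ t ∈ Ico 0 τ, ‖Matrix.toEuclideanCLM (𝕜 := ℂ) (δH t) (ψ t)‖ ≤
      g_max * (√((d : ℝ) * Module.finrank ℂ X / N) + η) := fun t ht => by
    replace ht := Ico_subset_Icc_self ht
    have hspan : ∀ x, Matrix.toEuclideanCLM (𝕜 := ℂ) (δH t) x ∈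
        span ℂ (D.image w : Set _) := by
      simpa only [Finset.coe_image] using hδspan t ht
    calc _ ≤ _ := ContinuousLinearMap.norm_apply_le_of_isSymmetric_of_mem_span
          (hδherm t ht).isSymmetric_toEuclideanCLM w.orthonormal hspan X (ψ t)
      _ ≤ g_max * (1 * √((d : ℝ) * Module.finrank ℂ X / N) + η) :=
          mul_le_mul (hδnorm t ht) (add_le_add (mul_le_mul (hψnorm t ht)
            (Real.sqrt_le_sqrt hDsum) (Real.sqrt_nonneg _) zero_le_one) (hX t ht))
            (add_nonneg (mul_nonneg (norm_nonneg _) (Real.sqrt_nonneg _)) (norm_nonneg _)) hg0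
      _ = _ := by rw [one_mul]
  calc ‖ψ τ - ψt τ‖ ≤ g_max * (√((d : ℝ) * Module.finrank ℂ X / N) + η) * (τ - 0) :=
        norm_sub_le_mul_of_hasDerivAt_neg_I_smul
          (A := fun t => Matrix.toEuclideanCLM (𝕜 := ℂ) (H t))
          (B := fun t => Matrix.toEuclideanCLM (𝕜 := ℂ) (δH t)) (by positivity)
          (fun t ht => by
            simpa only [map_add] using ((hHherm t (Ico_subset_Icc_self ht)).add
              (hδherm t (Ico_subset_Icc_self ht))).isSymmetric_toEuclideanCLM)
          hψ (fun t ht => by simpa only [map_add] using hψt t ht) hinit hkick τ ⟨hτ, le_rfl⟩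
    _ = _ := by ring

/-- robustness by confinement: if the path `ψ` of `ψ' = −iH(t)ψ` stays
`η`-close to a subspace `X` (`‖Π_{X⊥} ψ(t)‖ ≤ η` on `[0,τ]`), then for any orthonormal
basis `{w_i}` of `ℂ^N` and any `d ≤ N` there is a set `D` of `d` basis indices, with
`W = span{w_i : i ∈ D}`, such that every Hermitian perturbation `δH(t)` with image in `W`
and `‖δH(t)‖ ≤ g_max` shifts the final state by at most
`τ g_max (√(d · dim X / N) + η)`. -/
theorem stmt_11 (N : ℕ) (τ η g_max : ℝ) (hτ : 0 ≤ τ)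
    (H : ℝ → Matrix (Fin N) (Fin N) ℂ)
    (hHcont : ContinuousOn H (Set.Icc 0 τ))
    (hHherm : ∀ t ∈ Set.Icc (0 : ℝ) τ, (H t).IsHermitian)
    (ψ : ℝ → EuclideanSpace ℂ (Fin N))
    (hψ : ∀ t ∈ Set.Icc (0 : ℝ) τ,
      HasDerivAt ψ ((-Complex.I) • Matrix.toEuclideanCLM (𝕜 := ℂ) (H t) (ψ t)) t)
    (hψ0 : ‖ψ 0‖ = 1)
    (X : Submodule ℂ (EuclideanSpace ℂ (Fin N)))
    (hX : ∀ t ∈ Set.Icc (0 : ℝ) τ,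
      ‖(Submodule.orthogonalProjection Xᗮ (ψ t) : EuclideanSpace ℂ (Fin N))‖ ≤ η)
    (w : OrthonormalBasis (Fin N) ℂ (EuclideanSpace ℂ (Fin N)))
    (d : ℕ) (hd : d ≤ N) :
    ∃ D : Finset (Fin N), D.card = d ∧
      ∀ (δH : ℝ → Matrix (Fin N) (Fin N) ℂ) (ψt : ℝ → EuclideanSpace ℂ (Fin N)),
        ContinuousOn δH (Set.Icc 0 τ) →
        (∀ t ∈ Set.Icc (0 : ℝ) τ, (δH t).IsHermitian) →
        (∀ t ∈ Set.Icc (0 : ℝ) τ, ∀ x, Matrix.toEuclideanCLM (𝕜 := ℂ) (δH t) x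
          ∈ Submodule.span ℂ (w '' D)) →
        (∀ t ∈ Set.Icc (0 : ℝ) τ, ‖Matrix.toEuclideanCLM (𝕜 := ℂ) (δH t)‖ ≤ g_max) →
        (∀ t ∈ Set.Icc (0 : ℝ) τ,
          HasDerivAt ψt ((-Complex.I) • Matrix.toEuclideanCLM (𝕜 := ℂ)
            (H t + δH t) (ψt t)) t) →
        ψt 0 = ψ 0 →
        ‖ψ τ - ψt τ‖ ≤ τ * g_max *
          (Real.sqrt ((d : ℝ) * (Module.finrank ℂ X) / N) + η) :=
  stmt_11_general N τ η g_max hτ H hHherm ψ hψ hψ0 X hX w d hd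
end

section
/- For all natural numbers n ≥ 1 and θ with θ ≤ n/2, the binomial tail satisfies 2^{−n} Σ_{k=0}^{θ−1} C(n,k) ≤ e^{−(n/2 − θ)²/n}. -/
/-! Chernoff's method: for `t ≥ 0` the indicator of `k < θ` is at most `exp (t (θ - k))`, so the
binomial theorem bounds the tail by `exp (t θ) (1 + exp (-t)) ^ n`. Hoeffding's lemma for a fair
coin, `cosh s ≤ exp (s ^ 2 / 2)`, turns this into `2 ^ n exp (t θ + n (t ^ 2 / 8 - t / 2))`, and the
choice `t = 4 (n / 2 - θ) / n` gives `2 ^ n exp (-2 (n / 2 - θ) ^ 2 / n)`, which is even stronger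
than the claim. -/

open Real Finset

theorem sum_range_choose_mul_pow_le_one_add_pow {x : ℝ} (hx : 0 ≤ x) {m n : ℕ}
    (hm : m ≤ n + 1) : ∑ k ∈ range m, (n.choose k : ℝ) * x ^ k ≤ (1 + x) ^ n := by
  rw [add_comm, add_pow]
  calc ∑ k ∈ range m, (n.choose k : ℝ) * x ^ k
      ≤ ∑ k ∈ range (n + 1), (n.choose k : ℝ) * x ^ k :=
        sum_le_sum_of_subset_of_nonneg (range_subset_range.mpr hm) fun _ _ _ ↦ by positivity
    _ = ∑ k ∈ range (n + 1), x ^ k * 1 ^ (n - k) * n.choose k := by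
        simp only [one_pow, mul_one, mul_comm]

theorem sum_range_choose_le_exp_mul_one_add_exp_neg_pow {t : ℝ} (ht : 0 ≤ t) {θ n : ℕ}
    (hθ : θ ≤ n + 1) : ∑ k ∈ range θ, (n.choose k : ℝ) ≤ exp (t * θ) * (1 + exp (-t)) ^ n := by
  calc ∑ k ∈ range θ, (n.choose k : ℝ)
      ≤ ∑ k ∈ range θ, exp (t * θ) * ((n.choose k : ℝ) * exp (-t) ^ k) := by
        refine sum_le_sum fun k hk ↦ ?_
        have hkθ : (k : ℝ) ≤ θ := by exact_mod_cast (mem_range.mp hk).le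
        have hexp : 1 ≤ exp (t * θ) * exp (-t) ^ k := by
          rw [← exp_nat_mul, ← exp_add]
          exact one_le_exp (by nlinarith)
        nlinarith [(n.choose k).cast_nonneg (α := ℝ)]
    _ ≤ exp (t * θ) * (1 + exp (-t)) ^ n := by
        rw [← mul_sum]
        exact mul_le_mul_of_nonneg_left
          (sum_range_choose_mul_pow_le_one_add_pow (exp_pos _).le hθ) (exp_pos _).le

theorem one_add_exp_neg_le (t : ℝ) : 1 + exp (-t) ≤ 2 * exp (t ^ 2 / 8 - t / 2) := by
  have hcosh : 1 + exp (-t) = 2 * exp (-(t / 2)) * cosh (t / 2) := by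
    rw [cosh_eq, mul_comm 2, mul_assoc, mul_div_cancel₀ _ two_ne_zero, mul_add, ← exp_add,
      ← exp_add]
    ring_nf
    simp [add_comm]
  calc 1 + exp (-t) ≤ 2 * exp (-(t / 2)) * exp ((t / 2) ^ 2 / 2) := by
        rw [hcosh]
        gcongr
        exact cosh_le_exp_half_sq _
    _ = 2 * exp (t ^ 2 / 8 - t / 2) := by
        rw [mul_assoc, ← exp_add]
        ring_nf

theorem sum_range_choose_div_two_pow_le {n θ : ℕ} (hθ : (θ : ℝ) ≤ n / 2) :
    (∑ k ∈ range θ, (n.choose k : ℝ)) / 2 ^ n ≤ exp (-2 * ((n : ℝ) / 2 - θ) ^ 2 / n) := by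
  rcases n.eq_zero_or_pos with rfl | hn
  · obtain rfl : θ = 0 := by exact_mod_cast le_antisymm (by simpa using hθ) θ.cast_nonneg
    simp
  set a : ℝ := n / 2 - θ
  have hn' : (0 : ℝ) < n := by exact_mod_cast hn
  have hθn : θ ≤ n + 1 := by
    have : (θ : ℝ) ≤ n + 1 := by linarith
    exact_mod_cast this
  set t : ℝ := 4 * a / n
  have ht : 0 ≤ t := by positivity
  have hexponent : t * θ + n * (t ^ 2 / 8 - t / 2) = -2 * a ^ 2 / n := by
    simp only [t, a]
    field_simp
    ring
  rw [div_le_iff₀ (by positivity), ← hexponent, exp_add, exp_nat_mul]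
  calc ∑ k ∈ range θ, (n.choose k : ℝ)
      ≤ exp (t * θ) * (1 + exp (-t)) ^ n :=
        sum_range_choose_le_exp_mul_one_add_exp_neg_pow ht hθn
    _ ≤ exp (t * θ) * (2 * exp (t ^ 2 / 8 - t / 2)) ^ n := by
        gcongr
        exact one_add_exp_neg_le t
    _ = exp (t * θ) * exp (t ^ 2 / 8 - t / 2) ^ n * 2 ^ n := by ring

theorem stmt_18_general (n θ : ℕ) (hθ : (θ : ℝ) ≤ (n : ℝ) / 2) :
    (∑ k ∈ Finset.range θ, (n.choose k : ℝ)) / 2 ^ n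
      ≤ Real.exp (-((n : ℝ) / 2 - θ) ^ 2 / n) := by
  refine (sum_range_choose_div_two_pow_le hθ).trans (exp_le_exp.mpr ?_)
  rw [neg_mul, neg_div, neg_div, neg_le_neg_iff]
  exact div_le_div_of_nonneg_right (by nlinarith [sq_nonneg ((n : ℝ) / 2 - θ)]) n.cast_nonneg

/-- for `n ≥ 1` and `θ ≤ n/2`, the binomial tail satisfies
`2^{−n} Σ_{k=0}^{θ−1} C(n,k) ≤ e^{−(n/2 − θ)²/n}`. -/
theorem stmt_18 (n θ : ℕ) (hn : 1 ≤ n) (hθ : (θ : ℝ) ≤ (n : ℝ) / 2) :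
    (∑ k ∈ Finset.range θ, (n.choose k : ℝ)) / 2 ^ n
      ≤ Real.exp (-((n : ℝ) / 2 - θ) ^ 2 / n) :=
  stmt_18_general n θ hθ
end
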